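/- Let ρ_sc(x) := (1/(2π))·√(max(4−x², 0)) be the semicircle density. For every E ∈ (−2,2), the principal value integral of ρ_sc(x)/(x−E) equals −E/2; that is, lim_{ε→0⁺} ∫_{{x ∈ [−2,2] : |x−E| > ε}} ρ_sc(x)/(x−E) dx = −E/2. -/

import Mathlib

/-!
On `[-2, 2] \ {E}` the function `√(4 - x²) / (x - E)` has an explicit primitive, obtained from
`√(4 - x²) / (x - E) = (4 - E²) / ((x - E) √(4 - x²)) - (x + E) / √(4 - x²)`:
with `r = √(4 - E²)` it is
`F x = √(4 - x²) - E arcsin (x / 2) + r (log |x - E| - log (4 - E x + r √(4 - x²)))`.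
The truncated integral is therefore `(2π)⁻¹` times `F (E - ε) - F (E + ε) + F 2 - F (-2)`.
The only singular term `r log |x - E|` is even about `E`, so `F (E - ε) - F (E + ε) → 0`,
while the boundary values give `F 2 - F (-2) = -π E`.
-/

open Real MeasureTheory Filter

/-- The semicircle density `ρ_sc(x) = (1/(2π))·√((4−x²)₊)`. -/
noncomputable def semicircle (x : ℝ) : ℝ := (1 / (2 * π)) * Real.sqrt (max (4 - x ^ 2) 0)

lemma semicircle_eq (x : ℝ) : semicircle x = (2 * π)⁻¹ * √(4 - x ^ 2) := by
  rcases le_total (4 - x ^ 2) 0 with h | h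
  · simp [semicircle, max_eq_right h, Real.sqrt_eq_zero'.2 h]
  · simp [semicircle, max_eq_left h]

lemma setIntegral_Icc_lt_abs_sub {f : ℝ → ℝ} {a b c ε : ℝ} (hε : 0 ≤ ε)
    (ha : a ≤ c - ε) (hb : c + ε ≤ b)
    (hf₁ : IntervalIntegrable f volume a (c - ε)) (hf₂ : IntervalIntegrable f volume (c + ε) b) :
    ∫ x in {x | x ∈ Set.Icc a b ∧ ε < |x - c|}, f x
      = (∫ x in a..c - ε, f x) + ∫ x in c + ε..b, f x := by
  have hset : {x | x ∈ Set.Icc a b ∧ ε < |x - c|} = Set.Ico a (c - ε) ∪ Set.Ioc (c + ε) b := by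
    ext x
    simp only [Set.mem_ofPred_eq, Set.mem_Icc, Set.mem_union, Set.mem_Ico, Set.mem_Ioc, lt_abs]
    constructor
    · rintro ⟨⟨hxa, hxb⟩, h | h⟩
      · exact Or.inr ⟨by linarith, hxb⟩
      · exact Or.inl ⟨hxa, by linarith⟩
    · rintro (⟨hxa, hxc⟩ | ⟨hxc, hxb⟩)
      · exact ⟨⟨hxa, by linarith⟩, Or.inr (by linarith)⟩
      · exact ⟨⟨by linarith, hxb⟩, Or.inl (by linarith)⟩
  have hdisj : Disjoint (Set.Ico a (c - ε)) (Set.Ioc (c + ε) b) :=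
    Set.disjoint_left.2 fun x h₁ h₂ => by linarith [h₁.2, h₂.1]
  rw [hset, setIntegral_union hdisj measurableSet_Ioc (hf₁.1.congr_set_ae Ico_ae_eq_Ioc) hf₂.1,
    integral_Ico_eq_integral_Ioc, intervalIntegral.integral_of_le ha,
    intervalIntegral.integral_of_le (by linarith)]

namespace Semicircle

noncomputable def regularPart (E x : ℝ) : ℝ :=
  √(4 - x ^ 2) - E * arcsin (x / 2) - √(4 - E ^ 2) * log (4 - E * x + √(4 - E ^ 2) * √(4 - x ^ 2))

/-- `Real.log` is even, so `log (x - E)` is the `log |x - E|` of the classical primitive. -/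
noncomputable def primitive (E x : ℝ) : ℝ := regularPart E x + √(4 - E ^ 2) * log (x - E)

variable {E : ℝ}

lemma four_sub_mul_add_sqrt_mul_sqrt_pos {x : ℝ} (hE : E ∈ Set.Ioo (-2 : ℝ) 2)
    (hx : x ∈ Set.Icc (-2 : ℝ) 2) :
    0 < 4 - E * x + √(4 - E ^ 2) * √(4 - x ^ 2) := by
  obtain ⟨hE₁, hE₂⟩ := hE
  obtain ⟨hx₁, hx₂⟩ := hx
  have : E * x < 4 := by
    nlinarith [mul_nonneg (sub_nonneg.2 hx₂) (by linarith : (0 : ℝ) ≤ 2 + E),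
      mul_nonneg (by linarith : (0 : ℝ) ≤ 2 + x) (sub_pos.2 hE₂).le]
  positivity

lemma continuousOn_regularPart (hE : E ∈ Set.Ioo (-2 : ℝ) 2) :
    ContinuousOn (regularPart E) (Set.Icc (-2) 2) := by
  unfold regularPart
  have := fun x hx => (four_sub_mul_add_sqrt_mul_sqrt_pos hE (x := x) hx).ne'
  fun_prop (disch := assumption)

lemma hasDerivAt_sqrt_four_sub_sq {x : ℝ} (hx : x ∈ Set.Ioo (-2 : ℝ) 2) :
    HasDerivAt (fun y => √(4 - y ^ 2)) (-x / √(4 - x ^ 2)) x := by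
  have h : 4 - x ^ 2 ≠ 0 := by nlinarith [hx.1, hx.2]
  convert ((hasDerivAt_pow 2 x).const_sub 4).sqrt h using 1
  field_simp
  ring

lemma hasDerivAt_arcsin_half {x : ℝ} (hx : x ∈ Set.Ioo (-2 : ℝ) 2) :
    HasDerivAt (fun y => arcsin (y / 2)) (√(4 - x ^ 2))⁻¹ x := by
  have h₁ : x / 2 ≠ -1 := by linarith [hx.1]
  have h₂ : x / 2 ≠ 1 := by linarith [hx.2]
  refine ((hasDerivAt_arcsin h₁ h₂).comp x ((hasDerivAt_id x).div_const 2)).congr_deriv ?_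
  rw [show 1 - (x / 2) ^ 2 = (4 - x ^ 2) / 2 ^ 2 by ring, sqrt_div' _ (by positivity),
    sqrt_sq zero_le_two]
  field_simp

lemma hasDerivAt_primitive {x : ℝ} (hE : E ∈ Set.Ioo (-2 : ℝ) 2) (hx : x ∈ Set.Ioo (-2 : ℝ) 2)
    (hxE : x ≠ E) : HasDerivAt (primitive E) (√(4 - x ^ 2) / (x - E)) x := by
  have hsqrt := hasDerivAt_sqrt_four_sub_sq hx
  have harcsin := hasDerivAt_arcsin_half hx
  have hD := four_sub_mul_add_sqrt_mul_sqrt_pos hE (Set.Ioo_subset_Icc_self hx)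
  set q := √(4 - x ^ 2)
  set r := √(4 - E ^ 2)
  have hq : q ^ 2 = 4 - x ^ 2 := sq_sqrt (by nlinarith [hx.1, hx.2])
  have hr : r ^ 2 = 4 - E ^ 2 := sq_sqrt (by nlinarith [hE.1, hE.2])
  have hq₀ : 0 < q := sqrt_pos.2 (by nlinarith [hx.1, hx.2])
  have hlogD : HasDerivAt (fun y => log (4 - E * y + r * √(4 - y ^ 2)))
      ((-(E * 1) + r * (-x / q)) / (4 - E * x + r * q)) x :=
    ((((hasDerivAt_id x).const_mul E).const_sub 4).add (hsqrt.const_mul r)).log hD.ne'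
  have hlog : HasDerivAt (fun y => log (y - E)) (1 / (x - E)) x :=
    ((hasDerivAt_id x).sub_const E).log (sub_ne_zero.2 hxE)
  refine (((hsqrt.sub (harcsin.const_mul E)).sub (hlogD.const_mul r)).add
    (hlog.const_mul r)).congr_deriv ?_
  have hxE' : x - E ≠ 0 := sub_ne_zero.2 hxE
  have hD' : 4 - x * E + q * r ≠ 0 := by linarith
  field_simp
  linear_combination (r ^ 2 - (4 - x * E + q * r)) * hq + (4 - x * E) * hr

lemma continuousOn_sqrt_div_sub {a b : ℝ} (hE : E ∉ Set.Icc a b) :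
    ContinuousOn (fun x => √(4 - x ^ 2) / (x - E)) (Set.Icc a b) := by
  have : ∀ x ∈ Set.Icc a b, x - E ≠ 0 := fun x hx h => hE (sub_eq_zero.1 h ▸ hx)
  fun_prop (disch := assumption)

lemma integral_sqrt_div_sub {a b : ℝ} (hE : E ∈ Set.Ioo (-2 : ℝ) 2) (hab : a ≤ b)
    (ha : -2 ≤ a) (hb : b ≤ 2) (hEab : E ∉ Set.Icc a b) :
    ∫ x in a..b, √(4 - x ^ 2) / (x - E) = primitive E b - primitive E a := by
  have hne : ∀ x ∈ Set.Icc a b, x ≠ E := fun x hx h => hEab (h ▸ hx)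
  have hcont : ContinuousOn (primitive E) (Set.Icc a b) :=
    ((continuousOn_regularPart hE).mono (Set.Icc_subset_Icc ha hb)).add <|
      continuousOn_const.mul <| (continuousOn_id.sub continuousOn_const).log
        fun x hx => sub_ne_zero.2 (hne x hx)
  refine intervalIntegral.integral_eq_sub_of_hasDeriv_right_of_le hab hcont (fun x hx => ?_)
    ((continuousOn_sqrt_div_sub hEab).intervalIntegrable_of_Icc hab)
  exact (hasDerivAt_primitive hE ⟨ha.trans_lt hx.1, hx.2.trans_le hb⟩
    (hne x (Set.Ioo_subset_Icc_self hx))).hasDerivWithinAt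

lemma primitive_two_sub_primitive_neg_two (hE : E ∈ Set.Ioo (-2 : ℝ) 2) :
    primitive E 2 - primitive E (-2) = -E * π := by
  have h₁ : 2 - E ≠ 0 := by linarith [hE.2]
  have h₂ : 2 + E ≠ 0 := by linarith [hE.1]
  simp only [primitive, regularPart]
  rw [show (4 : ℝ) - 2 ^ 2 = 0 by norm_num, show (4 : ℝ) - (-2) ^ 2 = 0 by norm_num, sqrt_zero,
    show (2 : ℝ) / 2 = 1 by norm_num, show (-2 : ℝ) / 2 = -1 by norm_num, arcsin_one,
    arcsin_neg_one, show (-2 : ℝ) - E = -(2 + E) by ring, log_neg_eq_log,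
    show 4 - E * 2 + √(4 - E ^ 2) * 0 = 2 * (2 - E) by ring,
    show 4 - E * (-2) + √(4 - E ^ 2) * 0 = 2 * (2 + E) by ring,
    log_mul two_ne_zero h₁, log_mul two_ne_zero h₂]
  ring

lemma tendsto_primitive_sub_sub_primitive_add (hE : E ∈ Set.Ioo (-2 : ℝ) 2) :
    Tendsto (fun ε => primitive E (E - ε) - primitive E (E + ε)) (nhds 0) (nhds 0) := by
  have hreg : ContinuousAt (regularPart E) E :=
    (continuousOn_regularPart hE).continuousAt (Icc_mem_nhds hE.1 hE.2)
  have hsub : Tendsto (fun ε => regularPart E (E - ε) - regularPart E (E + ε)) (nhds 0)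
      (nhds (regularPart E (E - 0) - regularPart E (E + 0))) :=
    (hreg.comp_of_eq (by fun_prop) (sub_zero E)).tendsto.sub
      (hreg.comp_of_eq (by fun_prop) (add_zero E)).tendsto
  rw [sub_zero, add_zero, sub_self] at hsub
  -- the logarithmic singularities `log (-ε)` and `log ε` cancel
  refine hsub.congr fun ε => ?_
  simp only [primitive, sub_sub_cancel_left, add_sub_cancel_left, log_neg_eq_log]
  ring

end Semicircle

open Semicircle

/-- **Principal value of the Stieltjes transform of the semicircle law.** For every
`E ∈ (−2,2)`:
`lim_{ε→0⁺} ∫_{x ∈ [−2,2], |x−E| > ε} ρ_sc(x)/(x−E) dx = −E/2`. -/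
theorem semicircle_principal_value (E : ℝ) (hE : E ∈ Set.Ioo (-2 : ℝ) 2) :
    Tendsto (fun ε : ℝ =>
        ∫ x in {x : ℝ | x ∈ Set.Icc (-2 : ℝ) 2 ∧ ε < |x - E|}, semicircle x / (x - E))
      (nhdsWithin 0 (Set.Ioi 0)) (nhds (-E / 2)) := by
  have hlim : Tendsto (fun ε => (2 * π)⁻¹ * ((primitive E (E - ε) - primitive E (E + ε)) +
      (primitive E 2 - primitive E (-2)))) (nhdsWithin 0 (Set.Ioi 0)) (nhds (-E / 2)) := by
    convert (((tendsto_primitive_sub_sub_primitive_add hE).add_const _).const_mul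
      (2 * π)⁻¹).mono_left nhdsWithin_le_nhds using 2
    rw [primitive_two_sub_primitive_neg_two hE, zero_add]
    field_simp
  refine hlim.congr' ?_
  filter_upwards [Ioo_mem_nhdsGT (lt_min (by linarith [hE.1]) (by linarith [hE.2]) :
    (0 : ℝ) < min (E + 2) (2 - E))] with ε ⟨hε, hεE⟩
  have h₁ : -2 ≤ E - ε := by linarith [min_le_left (E + 2) (2 - E)]
  have h₂ : E + ε ≤ 2 := by linarith [min_le_right (E + 2) (2 - E)]
  have hl : E ∉ Set.Icc (-2) (E - ε) := fun h => by linarith [h.2]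
  have hr : E ∉ Set.Icc (E + ε) 2 := fun h => by linarith [h.1]
  simp_rw [semicircle_eq, mul_div_assoc]
  rw [setIntegral_Icc_lt_abs_sub hε.le h₁ h₂
      (((continuousOn_sqrt_div_sub hl).intervalIntegrable_of_Icc h₁).const_mul _)
      (((continuousOn_sqrt_div_sub hr).intervalIntegrable_of_Icc h₂).const_mul _),
    intervalIntegral.integral_const_mul, intervalIntegral.integral_const_mul,
    integral_sqrt_div_sub hE h₁ le_rfl (by linarith) hl,
    integral_sqrt_div_sub hE h₂ (by linarith) le_rfl hr]
  ring
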